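/- For n ≥ 2, let B_n be the braid group on n strands, i.e., the group presented by generators σ₁, …, σ_{n−1} subject to the relations σᵢσⱼ = σⱼσᵢ whenever |i − j| > 1 and σᵢσⱼσᵢ = σⱼσᵢσⱼ whenever |i − j| = 1. Then the genuine circular orderings are dense in the space of circular orderings of B_n: the closure of CO_g(B_n) in CO(B_n) equals CO(B_n). -/

import Mathlib

/-!
Let `<` be a left-ordering of `B_n`, `δ = σ₁ ⋯ σ_{n-1}` and `Δ² = δ ^ n = (σ₁ δ) ^ (n - 1)`,
which is central and nontrivial; let `ζ = Δ^{±2}` be the positive one. The elements bounded by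
powers of `ζ` form a subgroup that is closed under roots, so it contains `δ` and `σ₁ δ`, which
generate `B_n`: `ζ` is cofinal.

For a central cofinal `Z > 1` every `g` is `Z ^ m * r` with `1 ≤ r < Z`. Ordering `B_n` by
`(r, g)` lexicographically and taking cyclic orientations of triples gives a circular ordering;
left multiplication merely rotates this order, so it is left-invariant. It agrees with `c_<` on
triples inside a window `[x, x Z)`, and for `Z = ζ ^ k` every triple lies in such a window once
`k` is large, so these orderings converge to `c_<`. They are genuine for `k ≥ 3`: they take the
value `1` on `(1, ζ, ζ²)` and `-1` on `(1, ζ ^ (k-1), ζ ^ k)`, which no left-ordering does.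
-/

namespace Paper

variable {G : Type*} [Group G]

/-- A left-invariant circular ordering of a group `G`, as a function `G³ → {0, ±1} ⊆ ℤ`. -/
def IsCircOrd (c : G → G → G → ℤ) : Prop :=
  (∀ g₁ g₂ g₃ : G, c g₁ g₂ g₃ = 0 ↔ (g₁ = g₂ ∨ g₁ = g₃ ∨ g₂ = g₃)) ∧
  (∀ g₁ g₂ g₃ : G, c g₁ g₂ g₃ = 0 ∨ c g₁ g₂ g₃ = 1 ∨ c g₁ g₂ g₃ = -1) ∧
  (∀ g₁ g₂ g₃ g₄ : G, c g₂ g₃ g₄ - c g₁ g₃ g₄ + c g₁ g₂ g₄ - c g₁ g₂ g₃ = 0) ∧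
  (∀ g g₁ g₂ g₃ : G, c (g*g₁) (g*g₂) (g*g₃) = c g₁ g₂ g₃)

/-- The space CO(G) of circular orderings, topologized as a subspace of `ℤ^{G³}`
(all relevant values lie in the discrete set `{0,±1}`, and `ℤ` carries the discrete
topology, so this is the subspace topology from the product topology on `{0,±1}^{G³}`). -/
abbrev CircOrd (G : Type*) [Group G] := {c : G → G → G → ℤ // IsCircOrd c}

open Classical in
/-- The cocycle `f_c`: `f_c(g,h) = 0` if `g = 1` or `h = 1` or `c(1,g,gh) = 1`,
and `f_c(g,h) = 1` otherwise (i.e. when `gh = 1 ≠ g`, or `c(1,gh,g) = 1`). -/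
noncomputable def fc (c : G → G → G → ℤ) (g h : G) : ℤ :=
  if g = 1 ∨ h = 1 ∨ c 1 g (g*h) = 1 then 0 else 1

/-- Multiplication in the central extension `G̃_c = G × ℤ`:
`(g,n)(h,m) = (gh, n+m+f_c(g,h))`. -/
noncomputable def liftMul (c : G → G → G → ℤ) (x y : G × ℤ) : G × ℤ :=
  (x.1 * y.1, x.2 + y.2 + fc c x.1 y.1)

/-- Powers (with natural number exponents) in `G̃_c`. -/
noncomputable def liftPow (c : G → G → G → ℤ) (x : G × ℤ) : ℕ → G × ℤ
  | 0 => (1, 0)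
  | n+1 => liftMul c (liftPow c x n) x

/-- `[h]_c`: the unique integer `k` with `z_c^k ≤_c h <_c z_c^{k+1}`, where `<_c` is the
left-ordering of `G̃_c` with positive cone `{(g,n) : n ≥ 0} ∖ {(1,0)}` and `z_c = (1,1)`.
Since `z_c^k = (1,k)` and `f_c(g,g⁻¹) = 1` for `g ≠ 1`, this is exactly the second
coordinate of `h`. -/
def liftFloor (h : G × ℤ) : ℤ := h.2

/-- The translation number `r̃ot_c(h)` of `h ∈ G̃_c`: the limit of `[hⁿ]_c / n`
(`limUnder` picks out the limit when it exists). -/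
noncomputable def rotTilde (c : G → G → G → ℤ) (h : G × ℤ) : ℝ :=
  Filter.limUnder Filter.atTop (fun n : ℕ => (liftFloor (liftPow c h n) : ℝ) / (n : ℝ))

/-- The rotation number `rot_c(g) ∈ ℝ/ℤ`, computed using the lift `(g,0) ∈ G̃_c`
(it is independent of the choice of lift). -/
noncomputable def rotc (c : G → G → G → ℤ) (g : G) : AddCircle (1:ℝ) :=
  ((rotTilde c (g, 0) : ℝ) : AddCircle (1:ℝ))

/-- `τ_c(g,h) = r̃ot_c(g̃h̃) − r̃ot_c(g̃) − r̃ot_c(h̃)`, computed using the lifts `(g,0)`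
and `(h,0)` (it is independent of the choice of lifts). -/
noncomputable def tauc (c : G → G → G → ℤ) (g h : G) : ℝ :=
  rotTilde c (liftMul c (g,0) (h,0)) - rotTilde c (g,0) - rotTilde c (h,0)

/-- A positive cone of a group `G`: `P · P ⊆ P` and `P ∪ P⁻¹ = G ∖ {1}`.
It determines a left-ordering by `g < h` iff `g⁻¹h ∈ P`. -/
def IsPositiveCone (P : Set G) : Prop :=
  (∀ a ∈ P, ∀ b ∈ P, a * b ∈ P) ∧ (P ∪ P⁻¹ = {g : G | g ≠ 1})

/-- The left-ordering determined by a positive cone. -/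
def coneLt (P : Set G) (a b : G) : Prop := a⁻¹ * b ∈ P

open Classical in
/-- The secret left-ordering `c_<` determined by a positive cone `P`:
`c_<(a,b,c) = sign σ` where `σ` is the permutation sorting `(a,b,c)` into increasing
order, i.e. `c_< = 1` on positively cyclically ordered triples, `-1` on negatively
cyclically ordered triples, and `0` when the entries are not all distinct. -/
noncomputable def circOfCone (P : Set G) : G → G → G → ℤ := fun a b c =>
  if (coneLt P a b ∧ coneLt P b c) ∨ (coneLt P b c ∧ coneLt P c a) ∨
      (coneLt P c a ∧ coneLt P a b) then 1
  else if (coneLt P c b ∧ coneLt P b a) ∨ (coneLt P b a ∧ coneLt P a c) ∨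
      (coneLt P a c ∧ coneLt P c b) then -1
  else 0

/-- A circular ordering is a *secret left-ordering* if it is `c_<` for some
left-ordering `<` of `G`. -/
def IsSecret (c : G → G → G → ℤ) : Prop := ∃ P : Set G, IsPositiveCone P ∧ c = circOfCone P

/-- The braid relators on `m` generators `σ₀, …, σ_{m-1}`:
`σᵢσⱼσᵢ⁻¹σⱼ⁻¹` for `|i − j| > 1` and `σᵢσⱼσᵢ(σⱼσᵢσⱼ)⁻¹` for `|i − j| = 1`. -/
def braidRels (m : ℕ) : Set (FreeGroup (Fin m)) :=
  {r | ∃ i j : Fin m, ((i : ℕ) + 1 < (j : ℕ) ∨ (j : ℕ) + 1 < (i : ℕ)) ∧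
        r = FreeGroup.of i * FreeGroup.of j * (FreeGroup.of i)⁻¹ * (FreeGroup.of j)⁻¹} ∪
  {r | ∃ i j : Fin m, ((i : ℕ) + 1 = (j : ℕ) ∨ (j : ℕ) + 1 = (i : ℕ)) ∧
        r = FreeGroup.of i * FreeGroup.of j * FreeGroup.of i *
            (FreeGroup.of j * FreeGroup.of i * FreeGroup.of j)⁻¹}

/-- The braid group `B_n` on `n` strands, presented by the generators `σ₁, …, σ_{n−1}`
and the braid relations. -/
abbrev BraidGroup (n : ℕ) : Type := PresentedGroup (braidRels (n - 1))


section CyclicSign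

variable {α : Type*}

open Classical in
noncomputable def cyclicSign (r : α → α → Prop) (a b c : α) : ℤ :=
  if (r a b ∧ r b c) ∨ (r b c ∧ r c a) ∨ (r c a ∧ r a b) then 1
  else if (r c b ∧ r b a) ∨ (r b a ∧ r a c) ∨ (r a c ∧ r c b) then -1
  else 0

theorem cyclicSign_mem (r : α → α → Prop) (a b c : α) :
    cyclicSign r a b c = 0 ∨ cyclicSign r a b c = 1 ∨ cyclicSign r a b c = -1 := by
  grind [cyclicSign]

theorem cyclicSign_rotate (r : α → α → Prop) (a b c : α) :
    cyclicSign r a b c = cyclicSign r b c a := by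
  grind [cyclicSign]

variable [LinearOrder α]

def cmpSign (x y : α) : ℤ := if x < y then 1 else if y < x then -1 else 0

theorem cmpSign_swap (x y : α) : cmpSign y x = -cmpSign x y := by
  grind [cmpSign]

theorem cyclicSign_eq_cmpSign_add (a b c : α) :
    cyclicSign (· < ·) a b c = cmpSign a b + cmpSign b c + cmpSign c a := by
  grind [cyclicSign, cmpSign]

theorem cyclicSign_of_lt_of_lt {a b c : α} (hab : a < b) (hbc : b < c) :
    cyclicSign (· < ·) a b c = 1 := by
  grind [cyclicSign]

theorem cyclicSign_of_gt_of_gt {a b c : α} (hba : b < a) (hcb : c < b) :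
    cyclicSign (· < ·) a b c = -1 := by
  grind [cyclicSign]

theorem cyclicSign_comp_strictMono {β : Type*} [LinearOrder β] {f : α → β} (hf : StrictMono f)
    (a b c : α) : cyclicSign (· < ·) (f a) (f b) (f c) = cyclicSign (· < ·) a b c := by
  simp only [cyclicSign_eq_cmpSign_add, cmpSign, hf.lt_iff_lt]

theorem cyclicSign_eq_zero_iff (a b c : α) :
    cyclicSign (· < ·) a b c = 0 ↔ a = b ∨ a = c ∨ b = c := by
  grind [cyclicSign]

theorem cyclicSign_cocycle (a b c d : α) :
    cyclicSign (· < ·) b c d - cyclicSign (· < ·) a c d + cyclicSign (· < ·) a b d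
      - cyclicSign (· < ·) a b c = 0 := by
  simp only [cyclicSign_eq_cmpSign_add, cmpSign_swap d b, cmpSign_swap c a]
  ring

theorem cyclicSign_comp_eq_of_rotation {X : Type*} {k k' : X → α} (U : Set X)
    (hsame : ∀ u v, (u ∈ U ↔ v ∈ U) → (k' u < k' v ↔ k u < k v))
    (hcross : ∀ u ∈ U, ∀ v ∉ U, k v < k u ∧ k' u < k' v) (a b c : X) :
    cyclicSign (· < ·) (k' a) (k' b) (k' c) = cyclicSign (· < ·) (k a) (k b) (k c) := by
  classical
  -- Moving `U` to the front changes each `cmpSign` by a coboundary, which cancels cyclically.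
  let χ : X → ℤ := fun u => if u ∈ U then 1 else 0
  have hcmp : ∀ u v, cmpSign (k' u) (k' v) = cmpSign (k u) (k v) + 2 * (χ u - χ v) := by
    intro u v
    have := hsame u v
    have := hsame v u
    have := hcross u
    have := hcross v
    grind [cmpSign]
  simp only [cyclicSign_eq_cmpSign_add, hcmp]
  ring

end CyclicSign

theorem coneLt_mul_left_iff {P : Set G} (g a b : G) :
    coneLt P (g * a) (g * b) ↔ coneLt P a b := by
  simp only [coneLt, mul_inv_rev, ← mul_assoc, inv_mul_cancel_right]

namespace IsPositiveCone

variable {P : Set G}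

theorem isStrictTotalOrder (hP : IsPositiveCone P) : IsStrictTotalOrder G (coneLt P) where
  irrefl a h := by
    have : a⁻¹ * a ∈ P ∪ P⁻¹ := Or.inl h
    simp [hP.2] at this
  trans a b c hab hbc := by
    simpa [coneLt, mul_assoc] using hP.1 _ hab _ hbc
  trichotomous a b hab hba := by
    by_contra hne
    have : a⁻¹ * b ∈ P ∪ P⁻¹ := by
      rw [hP.2]
      simpa [inv_mul_eq_one] using hne
    rcases this with h | h
    · exact hab h
    · exact hba (by simpa [coneLt] using h)

noncomputable abbrev linearOrder (hP : IsPositiveCone P) : LinearOrder G :=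
  haveI := hP.isStrictTotalOrder
  letI := Classical.decRel (coneLt P)
  linearOrderOfSTO (coneLt P)

theorem mulLeftMono (hP : IsPositiveCone P) : letI := hP.linearOrder; MulLeftMono G := by
  let := hP.linearOrder
  refine ⟨fun g a b hab => ?_⟩
  rcases hab with rfl | hab
  · exact le_rfl
  · exact le_of_lt ((coneLt_mul_left_iff g a b).2 hab)

theorem circOfCone_eq (hP : IsPositiveCone P) :
    letI := hP.linearOrder; circOfCone P = cyclicSign (· < ·) := rfl

end IsPositiveCone

theorem not_isSecret_of_eq_one_of_eq_neg_one {c : G → G → G → ℤ} {w : G} (hw : w ≠ 1) {N : ℕ}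
    (hN : 2 ≤ N) (h1 : c 1 w (w ^ 2) = 1) (h2 : c 1 (w ^ (N - 1)) (w ^ N) = -1) : ¬ IsSecret c := by
  rintro ⟨Q, hQ, rfl⟩
  let := hQ.linearOrder
  have := hQ.mulLeftMono
  rw [hQ.circOfCone_eq] at h1 h2
  rcases hw.lt_or_gt with hw | hw
  · have hw2 : w ^ 2 < w := by simpa [pow_two] using (mul_lt_mul_iff_left w).2 hw
    rw [cyclicSign_of_gt_of_gt hw hw2] at h1
    exact absurd h1 (by decide)
  · rw [cyclicSign_of_lt_of_lt (one_lt_pow' hw (by omega)) (pow_lt_pow_right' hw (by omega))] at h2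
    exact absurd h2 (by decide)

theorem tendsto_circOrd_of_eventually_eq {ι : Type*} {l : Filter ι} {F : ι → CircOrd G}
    {d : CircOrd G} (h : ∀ a b c, ∀ᶠ i in l, (F i).1 a b c = d.1 a b c) :
    Filter.Tendsto F l (nhds d) := by
  rw [tendsto_subtype_rng]
  refine tendsto_pi_nhds.2 fun a => tendsto_pi_nhds.2 fun b => tendsto_pi_nhds.2 fun c => ?_
  rw [nhds_discrete, Filter.tendsto_pure]
  exact h a b c

section LeftOrdered

variable [LinearOrder G] [MulLeftMono G]

theorem zpow_right_strictMono' {Z : G} (hZ : 1 < Z) : StrictMono fun n : ℤ => Z ^ n :=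
  strictMono_int_of_lt_succ fun n => by
    simpa [zpow_add_one] using lt_mul_of_one_lt_right' (Z ^ n) hZ

structure IsCentralCofinal (Z : G) : Prop where
  commute : ∀ g, Commute Z g
  one_lt : 1 < Z
  exists_lt_pow : ∀ g, ∃ n : ℕ, g < Z ^ n

namespace IsCentralCofinal

variable {Z : G} (hZ : IsCentralCofinal Z)
include hZ

theorem pow {k : ℕ} (hk : k ≠ 0) : IsCentralCofinal (Z ^ k) where
  commute g := (hZ.commute g).pow_left k
  one_lt := one_lt_pow' hZ.one_lt hk
  exists_lt_pow g := by
    obtain ⟨n, hn⟩ := hZ.exists_lt_pow g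
    refine ⟨n, hn.trans_le ?_⟩
    rw [← pow_mul]
    exact pow_le_pow_right' hZ.one_lt.le (Nat.le_mul_of_pos_left n (Nat.pos_of_ne_zero hk))

theorem exists_zpow_le_lt (g : G) : ∃ m : ℤ, Z ^ m ≤ g ∧ g < Z ^ (m + 1) := by
  have hmono := zpow_right_strictMono' hZ.one_lt
  obtain ⟨s, hs⟩ := hZ.exists_lt_pow g
  obtain ⟨t, ht⟩ := hZ.exists_lt_pow g⁻¹
  obtain ⟨m, hm, hmax⟩ := Int.exists_greatest_of_bdd (P := fun m : ℤ => Z ^ m ≤ g)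
    ⟨s, fun m hm => (hmono.lt_iff_lt.1 (hm.trans_lt (by simpa using hs))).le⟩
    ⟨-t, by
      rw [zpow_neg, zpow_natCast, inv_le_iff_one_le_mul', ((hZ.commute g).pow_left t).eq]
      simpa using ((mul_lt_mul_iff_left g).2 ht).le⟩
  exact ⟨m, hm, lt_of_not_ge fun h => by simpa using hmax _ h⟩

noncomputable def floor (g : G) : ℤ := (hZ.exists_zpow_le_lt g).choose

theorem zpow_floor_le (g : G) : Z ^ hZ.floor g ≤ g := (hZ.exists_zpow_le_lt g).choose_spec.1

theorem lt_zpow_floor_add_one (g : G) : g < Z ^ (hZ.floor g + 1) :=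
  (hZ.exists_zpow_le_lt g).choose_spec.2

theorem le_floor_iff {g : G} {m : ℤ} : m ≤ hZ.floor g ↔ Z ^ m ≤ g := by
  have hmono := zpow_right_strictMono' hZ.one_lt
  refine ⟨fun h => (hmono.monotone h).trans (hZ.zpow_floor_le g), fun h => ?_⟩
  have := hmono.lt_iff_lt.1 (h.trans_lt (hZ.lt_zpow_floor_add_one g))
  omega

theorem floor_lt_iff {g : G} {m : ℤ} : hZ.floor g < m ↔ g < Z ^ m := by
  rw [← not_le, hZ.le_floor_iff, not_le]

theorem floor_eq_iff {g : G} {m : ℤ} : hZ.floor g = m ↔ Z ^ m ≤ g ∧ g < Z ^ (m + 1) := by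
  rw [← hZ.le_floor_iff, ← hZ.floor_lt_iff]
  omega

theorem floor_zpow_mul (j : ℤ) (g : G) : hZ.floor (Z ^ j * g) = j + hZ.floor g := by
  rw [hZ.floor_eq_iff, add_assoc, zpow_add, zpow_add, mul_le_mul_iff_left, mul_lt_mul_iff_left]
  exact ⟨hZ.zpow_floor_le g, hZ.lt_zpow_floor_add_one g⟩

noncomputable def frac (g : G) : G := Z ^ (-hZ.floor g) * g

theorem one_le_frac (g : G) : 1 ≤ hZ.frac g := by
  simpa [frac, ← zpow_add] using (mul_le_mul_iff_left (Z ^ (-hZ.floor g))).2 (hZ.zpow_floor_le g)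

theorem frac_lt (g : G) : hZ.frac g < Z := by
  have h := (mul_lt_mul_iff_left (Z ^ (-hZ.floor g))).2 (hZ.lt_zpow_floor_add_one g)
  rwa [← zpow_add, neg_add_cancel_left, zpow_one] at h

theorem frac_zpow_mul (j : ℤ) (g : G) : hZ.frac (Z ^ j * g) = hZ.frac g := by
  rw [frac, frac, hZ.floor_zpow_mul, ← mul_assoc, ← zpow_add]
  congr 2
  ring

theorem frac_eq_self {g : G} (h1 : 1 ≤ g) (h2 : g < Z) : hZ.frac g = g := by
  have : hZ.floor g = 0 := hZ.floor_eq_iff.2 ⟨by simpa using h1, by simpa using h2⟩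
  simp [frac, this]

theorem floor_mono {a b : G} (h : a ≤ b) : hZ.floor a ≤ hZ.floor b :=
  hZ.le_floor_iff.2 ((hZ.zpow_floor_le a).trans h)

theorem floor_le_floor_mul_frac (g u : G) : hZ.floor g ≤ hZ.floor (g * hZ.frac u) :=
  hZ.floor_mono (le_mul_of_one_le_right' (hZ.one_le_frac u))

theorem floor_mul_frac_le (g u : G) : hZ.floor (g * hZ.frac u) ≤ hZ.floor g + 1 := by
  rw [← Int.lt_add_one_iff, hZ.floor_lt_iff]
  calc g * hZ.frac u < g * Z := (mul_lt_mul_iff_left g).2 (hZ.frac_lt u)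
    _ = Z * g := ((hZ.commute g).eq).symm
    _ < Z * Z ^ (hZ.floor g + 1) := (mul_lt_mul_iff_left Z).2 (hZ.lt_zpow_floor_add_one g)
    _ = Z ^ (hZ.floor g + 1 + 1) := by rw [← zpow_one_add, add_comm]

theorem frac_mul_eq (g u : G) :
    hZ.frac (g * u) = Z ^ (-hZ.floor (g * hZ.frac u)) * (g * hZ.frac u) := by
  have hc : g * Z ^ (-hZ.floor u) = Z ^ (-hZ.floor u) * g := ((hZ.commute g).zpow_left _).eq.symm
  have h : Z ^ hZ.floor u * (g * hZ.frac u) = g * u := by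
    rw [frac, ← mul_assoc g, hc]
    group
  rw [← h, hZ.frac_zpow_mul, frac]

theorem frac_lt_frac_of_floor_lt {g u v : G}
    (h : hZ.floor (g * hZ.frac v) < hZ.floor (g * hZ.frac u)) : hZ.frac v < hZ.frac u :=
  lt_of_not_ge fun huv => h.not_ge (hZ.floor_mono ((mul_le_mul_iff_left g).2 huv))

theorem frac_mul_lt_frac_mul {g u v : G} (hu : hZ.floor (g * hZ.frac u) = hZ.floor g + 1)
    (hv : hZ.floor (g * hZ.frac v) = hZ.floor g) : hZ.frac (g * u) < hZ.frac (g * v) := by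
  rw [hZ.frac_mul_eq, hZ.frac_mul_eq, hu, hv]
  calc Z ^ (-(hZ.floor g + 1)) * (g * hZ.frac u) < Z ^ (-(hZ.floor g + 1)) * (g * Z) :=
        (mul_lt_mul_iff_left _).2 ((mul_lt_mul_iff_left g).2 (hZ.frac_lt u))
    _ = Z ^ (-hZ.floor g) * g := by
        rw [← (hZ.commute g).eq, ← mul_assoc, ← zpow_add_one]
        congr 2
        ring
    _ ≤ Z ^ (-hZ.floor g) * (g * hZ.frac v) :=
        (mul_le_mul_iff_left _).2 (le_mul_of_one_le_right' (hZ.one_le_frac v))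

noncomputable def key (u : G) : Lex (G × G) := toLex (hZ.frac u, u)

theorem key_injective : Function.Injective hZ.key :=
  fun _ _ h => (Prod.ext_iff.1 (toLex.injective h)).2

theorem key_mul_lt_key_mul_iff {g u v : G}
    (h : hZ.floor (g * hZ.frac u) = hZ.floor (g * hZ.frac v)) :
    hZ.key (g * u) < hZ.key (g * v) ↔ hZ.key u < hZ.key v := by
  simp only [key, hZ.frac_mul_eq, h, Prod.Lex.toLex_lt_toLex, mul_lt_mul_iff_left, mul_right_inj]

noncomputable def wrap (a b c : G) : ℤ := cyclicSign (· < ·) (hZ.key a) (hZ.key b) (hZ.key c)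

/-- On representatives, left multiplication by `g` is `r ↦ Z ^ (-k) * (g * r)` with
`k = floor (g * r) ∈ {floor g, floor g + 1}`: it preserves the key order for each value of `k`
and moves the representatives with `k = floor g + 1` in front of the others. -/
theorem wrap_mul_left (g a b c : G) : hZ.wrap (g * a) (g * b) (g * c) = hZ.wrap a b c := by
  have hlo := hZ.floor_le_floor_mul_frac g
  have hhi := hZ.floor_mul_frac_le g
  refine cyclicSign_comp_eq_of_rotation (k' := fun u => hZ.key (g * u))
    {u | hZ.floor g < hZ.floor (g * hZ.frac u)} (fun u v huv => ?_) (fun u hu v hv => ?_) a b c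
  · refine hZ.key_mul_lt_key_mul_iff ?_
    have := hlo u; have := hlo v; have := hhi u; have := hhi v
    simp only [Set.mem_ofPred_eq] at huv
    omega
  · simp only [Set.mem_ofPred_eq] at hu hv
    have hu' : hZ.floor (g * hZ.frac u) = hZ.floor g + 1 := by have := hhi u; omega
    have hv' : hZ.floor (g * hZ.frac v) = hZ.floor g := by have := hlo v; omega
    exact ⟨Prod.Lex.toLex_lt_toLex.2 (Or.inl (hZ.frac_lt_frac_of_floor_lt (g := g) (by omega))),
      Prod.Lex.toLex_lt_toLex.2 (Or.inl (hZ.frac_mul_lt_frac_mul hu' hv'))⟩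

theorem isCircOrd_wrap : IsCircOrd hZ.wrap :=
  ⟨fun a b c => by simp only [wrap, cyclicSign_eq_zero_iff, hZ.key_injective.eq_iff],
   fun _ _ _ => cyclicSign_mem _ _ _ _,
   fun _ _ _ _ => cyclicSign_cocycle _ _ _ _,
   hZ.wrap_mul_left⟩

theorem key_of_mem_Ico {u : G} (hu : u ∈ Set.Ico 1 Z) : hZ.key u = toLex (u, u) := by
  rw [key, hZ.frac_eq_self hu.1 hu.2]

theorem wrap_eq_of_mem_Ico {a b c : G} (ha : a ∈ Set.Ico 1 Z) (hb : b ∈ Set.Ico 1 Z)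
    (hc : c ∈ Set.Ico 1 Z) : hZ.wrap a b c = cyclicSign (· < ·) a b c := by
  rw [wrap, hZ.key_of_mem_Ico ha, hZ.key_of_mem_Ico hb, hZ.key_of_mem_Ico hc]
  exact cyclicSign_comp_strictMono (f := fun x : G => toLex (x, x))
    (fun _ _ h => Prod.Lex.toLex_lt_toLex.2 (Or.inl h)) a b c

theorem frac_self : hZ.frac Z = 1 := by
  simpa [hZ.frac_eq_self le_rfl hZ.one_lt] using hZ.frac_zpow_mul 1 1

theorem wrap_not_isSecret {w : G} {N : ℕ} (hw : 1 < w) (hN : 3 ≤ N) (hwZ : w ^ N = Z) :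
    ¬ IsSecret hZ.wrap := by
  have hlt {i j : ℕ} (hij : i < j) : w ^ i < w ^ j := pow_lt_pow_right' hw hij
  have hmem {i : ℕ} (hi : i < N) : w ^ i ∈ Set.Ico 1 Z :=
    ⟨Left.one_le_pow_of_le hw.le i, hwZ ▸ hlt (j := N) hi⟩
  refine not_isSecret_of_eq_one_of_eq_neg_one hw.ne' (N := N) (by omega) ?_ ?_
  · rw [hZ.wrap_eq_of_mem_Ico (by simpa using hmem (i := 0) (by omega))
      (by simpa using hmem (i := 1) (by omega)) (hmem (by omega))]
    exact cyclicSign_of_lt_of_lt (by simpa using hlt (i := 0) (j := 1) (by omega))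
      (by simpa using hlt (i := 1) (j := 2) (by omega))
  · rw [hwZ, wrap, cyclicSign_rotate, key, key, key, hZ.frac_self,
      hZ.frac_eq_self le_rfl hZ.one_lt, hZ.frac_eq_self (hmem (by omega)).1 (hmem (by omega)).2]
    refine cyclicSign_of_gt_of_gt (Prod.Lex.toLex_lt_toLex.2 (Or.inl ?_))
      (Prod.Lex.toLex_lt_toLex.2 (Or.inr ⟨rfl, hZ.one_lt⟩))
    simpa using hlt (i := 0) (j := N - 1) (by omega)

theorem mem_closure_setOf_not_isSecret (d : CircOrd G) (hd : d.1 = cyclicSign (· < ·)) :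
    d ∈ closure {e : CircOrd G | ¬ IsSecret e.1} := by
  have hZk (k : ℕ) : IsCentralCofinal (Z ^ (k + 3)) := hZ.pow (by omega)
  let F : ℕ → CircOrd G := fun k => ⟨(hZk k).wrap, (hZk k).isCircOrd_wrap⟩
  refine mem_closure_of_tendsto (f := F)
    (tendsto_circOrd_of_eventually_eq (l := Filter.atTop) fun a b c => ?_)
    (Filter.Eventually.of_forall fun k => (hZk k).wrap_not_isSecret hZ.one_lt (by omega) rfl)
  set x := min a (min b c)
  obtain ⟨n, hn⟩ := hZ.exists_lt_pow (max (x⁻¹ * a) (max (x⁻¹ * b) (x⁻¹ * c)))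
  filter_upwards [Filter.eventually_ge_atTop n] with k hk
  have hmem {y : G} (hxy : x ≤ y) (hy : x⁻¹ * y ≤ max (x⁻¹ * a) (max (x⁻¹ * b) (x⁻¹ * c))) :
      x⁻¹ * y ∈ Set.Ico 1 (Z ^ (k + 3)) :=
    ⟨by simpa using (mul_le_mul_iff_left x⁻¹).2 hxy,
      (hy.trans_lt hn).trans_le (pow_le_pow_right' hZ.one_lt.le (by omega))⟩
  calc (F k).1 a b c = (hZk k).wrap (x⁻¹ * a) (x⁻¹ * b) (x⁻¹ * c) :=
        ((hZk k).wrap_mul_left x⁻¹ a b c).symm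
    _ = cyclicSign (· < ·) (x⁻¹ * a) (x⁻¹ * b) (x⁻¹ * c) :=
        (hZk k).wrap_eq_of_mem_Ico (hmem (by simp [x]) (by simp)) (hmem (by simp [x]) (by simp))
          (hmem (by simp [x]) (by simp))
    _ = d.1 a b c := by rw [hd, cyclicSign_comp_strictMono (mul_right_strictMono (a := x⁻¹))]

end IsCentralCofinal

section BoundedSubgroup

variable {ζ : G}

theorem mul_le_pow_add (hζ : ∀ g, Commute ζ g) {a b : G} {m n : ℕ} (ha : a ≤ ζ ^ m)
    (hb : b ≤ ζ ^ n) : a * b ≤ ζ ^ (n + m) :=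
  calc a * b ≤ a * ζ ^ n := (mul_le_mul_iff_left a).2 hb
    _ = ζ ^ n * a := ((hζ a).pow_left n).eq.symm
    _ ≤ ζ ^ n * ζ ^ m := (mul_le_mul_iff_left _).2 ha
    _ = ζ ^ (n + m) := (pow_add ζ n m).symm

def boundedSubgroup (ζ : G) (hζ : ∀ g, Commute ζ g) : Subgroup G where
  carrier := {g | (∃ n : ℕ, g ≤ ζ ^ n) ∧ ∃ n : ℕ, g⁻¹ ≤ ζ ^ n}
  one_mem' := ⟨⟨0, by simp⟩, ⟨0, by simp⟩⟩
  inv_mem' := fun ⟨h1, h2⟩ => ⟨by simpa using h2, by simpa using h1⟩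
  mul_mem' := fun ⟨⟨_, ha⟩, ⟨_, ha'⟩⟩ ⟨⟨_, hb⟩, ⟨_, hb'⟩⟩ =>
    ⟨⟨_, mul_le_pow_add hζ ha hb⟩, ⟨_, by simpa using mul_le_pow_add hζ hb' ha'⟩⟩

theorem exists_le_pow_of_pow_le {x : G} {q n : ℕ} (hq : q ≠ 0) (h : x ^ q ≤ ζ ^ n) :
    ∃ k : ℕ, x ≤ ζ ^ k := by
  rcases le_or_gt x 1 with hx | hx
  · exact ⟨0, by simpa using hx⟩
  · exact ⟨n, (le_self_pow hx.le hq).trans h⟩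

theorem mem_boundedSubgroup_of_pow_mem (hζ : ∀ g, Commute ζ g) {g : G} {q : ℕ} (hq : q ≠ 0)
    (h : g ^ q ∈ boundedSubgroup ζ hζ) : g ∈ boundedSubgroup ζ hζ := by
  obtain ⟨⟨n, hn⟩, ⟨n', hn'⟩⟩ := h
  exact ⟨exists_le_pow_of_pow_le hq hn, exists_le_pow_of_pow_le hq (by rwa [inv_pow])⟩

theorem self_mem_boundedSubgroup (hζ : ∀ g, Commute ζ g) (h : 1 ≤ ζ) :
    ζ ∈ boundedSubgroup ζ hζ :=
  ⟨⟨1, by simp⟩, ⟨0, by simpa using h⟩⟩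

end BoundedSubgroup

end LeftOrdered

section Braid

variable {m : ℕ}

/-- `braidGen m j` is the paper's `σ_{j+1}`, and `1` when `j ≥ m`. -/
def braidGen (m j : ℕ) : PresentedGroup (braidRels m) :=
  if h : j < m then PresentedGroup.of ⟨j, h⟩ else 1

theorem braidGen_commute {a b : ℕ} (hab : a + 2 ≤ b) :
    Commute (braidGen m a) (braidGen m b) := by
  unfold braidGen
  split_ifs with ha hb hb
  · have hr : FreeGroup.of (⟨a, ha⟩ : Fin m) * FreeGroup.of ⟨b, hb⟩ *
        (FreeGroup.of ⟨b, hb⟩ * FreeGroup.of ⟨a, ha⟩)⁻¹ ∈ braidRels m :=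
      Or.inl ⟨⟨a, ha⟩, ⟨b, hb⟩, Or.inl (by simp only; omega), by group⟩
    have h := PresentedGroup.mk_eq_mk_of_mul_inv_mem hr
    rw [map_mul, map_mul] at h
    exact h
  all_goals simp [Commute, SemiconjBy]

theorem braidGen_braid {a : ℕ} (h : a + 1 < m) :
    braidGen m a * braidGen m (a + 1) * braidGen m a =
      braidGen m (a + 1) * braidGen m a * braidGen m (a + 1) := by
  have hr : FreeGroup.of (⟨a, by omega⟩ : Fin m) * FreeGroup.of ⟨a + 1, h⟩ *
      FreeGroup.of ⟨a, by omega⟩ * (FreeGroup.of ⟨a + 1, h⟩ * FreeGroup.of ⟨a, by omega⟩ *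
        FreeGroup.of ⟨a + 1, h⟩)⁻¹ ∈ braidRels m :=
    Or.inr ⟨_, _, Or.inl rfl, rfl⟩
  simp only [braidGen, h, show a < m by omega, dite_true]
  have h := PresentedGroup.mk_eq_mk_of_mul_inv_mem hr
  simp only [map_mul] at h
  exact h

/-- `braidProd m j = σ₁ ⋯ σ_j`; `δ = braidProd m m` satisfies `δ ^ (m + 1) = Δ²`. -/
def braidProd (m : ℕ) : ℕ → PresentedGroup (braidRels m)
  | 0 => 1
  | j + 1 => braidProd m j * braidGen m j

theorem braidProd_succ (j : ℕ) : braidProd m (j + 1) = braidProd m j * braidGen m j := rfl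

theorem braidProd_commute_braidGen {j b : ℕ} (h : j + 1 ≤ b) :
    Commute (braidProd m j) (braidGen m b) := by
  induction j with
  | zero => exact Commute.one_left _
  | succ t ih => exact (ih (by omega)).mul_left (braidGen_commute (by omega))

theorem braidProd_mul_braidGen {i j : ℕ} (hi : i + 1 < m) (hj : i + 2 ≤ j) :
    braidProd m j * braidGen m i = braidGen m (i + 1) * braidProd m j := by
  induction j, hj using Nat.le_induction with
  | base =>
    calc braidProd m (i + 2) * braidGen m i
        = braidProd m i * (braidGen m i * braidGen m (i + 1) * braidGen m i) := by
          simp only [braidProd_succ, mul_assoc]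
      _ = braidProd m i * braidGen m (i + 1) * (braidGen m i * braidGen m (i + 1)) := by
          rw [braidGen_braid hi]
          simp only [mul_assoc]
      _ = braidGen m (i + 1) * braidProd m (i + 2) := by
          rw [(braidProd_commute_braidGen le_rfl).eq]
          simp only [braidProd_succ, mul_assoc]
  | succ n hn ih =>
    rw [braidProd_succ, mul_assoc, (braidGen_commute (by omega)).symm.eq, ← mul_assoc, ih,
      mul_assoc]

theorem braidProd_pow_mul_braidGen {i j : ℕ} (h : i + j + 1 ≤ m) :
    braidProd m m ^ j * braidGen m i = braidGen m (i + j) * braidProd m m ^ j := by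
  induction j generalizing i with
  | zero => simp
  | succ t ih =>
    rw [pow_succ, mul_assoc, braidProd_mul_braidGen (by omega) (by omega), ← mul_assoc,
      ih (by omega), mul_assoc, ← pow_succ, add_right_comm, add_assoc]

theorem braidGen_zero_mul_braidProd_pow {t : ℕ} (ht : t ≤ m) :
    (braidGen m 0 * braidProd m m) ^ t = braidProd m t * braidProd m m ^ t := by
  induction t with
  | zero => simp [braidProd]
  | succ t ih =>
    rw [pow_succ, ih (by omega), braidProd_succ, mul_assoc, mul_assoc, ← mul_assoc _ (braidGen m 0),
      braidProd_pow_mul_braidGen (by omega), zero_add, mul_assoc, ← pow_succ]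

theorem braidGen_zero_mul_braidProd_pow_self :
    (braidGen m 0 * braidProd m m) ^ m = braidProd m m ^ (m + 1) := by
  rw [braidGen_zero_mul_braidProd_pow le_rfl, ← pow_succ']

theorem of_eq_braidProd_pow_conj (i : Fin m) :
    PresentedGroup.of i = braidProd m m ^ (i : ℕ) * braidGen m 0 * (braidProd m m ^ (i : ℕ))⁻¹ := by
  rw [braidProd_pow_mul_braidGen (by omega), zero_add, mul_inv_cancel_right, braidGen,
    dif_pos i.isLt]

theorem eq_top_of_braidProd_mem (H : Subgroup (PresentedGroup (braidRels m)))
    (hδ : braidProd m m ∈ H) (hγ : braidGen m 0 * braidProd m m ∈ H) : H = ⊤ := by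
  have hσ : braidGen m 0 ∈ H := by simpa using H.mul_mem hγ (H.inv_mem hδ)
  rw [eq_top_iff, ← PresentedGroup.closure_range_of, Subgroup.closure_le]
  rintro _ ⟨i, rfl⟩
  rw [of_eq_braidProd_pow_conj i]
  exact H.mul_mem (H.mul_mem (H.pow_mem hδ _) hσ) (H.inv_mem (H.pow_mem hδ _))

theorem commute_braidProd_pow (g : PresentedGroup (braidRels m)) :
    Commute (braidProd m m ^ (m + 1)) g := by
  have hH := eq_top_of_braidProd_mem (Subgroup.centralizer {braidProd m m ^ (m + 1)})
    (Subgroup.mem_centralizer_singleton_iff.2 (Commute.self_pow _ _).eq)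
    (Subgroup.mem_centralizer_singleton_iff.2 (by
      rw [← braidGen_zero_mul_braidProd_pow_self]
      exact (Commute.self_pow _ _).eq))
  exact (Subgroup.mem_centralizer_singleton_iff.1 (hH ▸ Subgroup.mem_top g)).symm

theorem braidProd_pow_ne_one (hm : 1 ≤ m) : braidProd m m ^ (m + 1) ≠ 1 := by
  have hrels : ∀ r ∈ braidRels m, FreeGroup.lift (fun _ => Multiplicative.ofAdd (1 : ℤ)) r = 1 := by
    rintro r (⟨i, j, -, rfl⟩ | ⟨i, j, -, rfl⟩) <;>
      simp only [map_mul, map_inv, FreeGroup.lift_apply_of] <;> group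
  let exponentSum := PresentedGroup.toGroup hrels
  have hsum {j : ℕ} (hj : j ≤ m) : exponentSum (braidProd m j) = Multiplicative.ofAdd (j : ℤ) := by
    induction j with
    | zero => rfl
    | succ t ih =>
      rw [braidProd_succ, map_mul, ih (by omega), braidGen, dif_pos (by omega),
        PresentedGroup.toGroup.of, ← ofAdd_add]
      push_cast
      rfl
  intro h
  have h' := congrArg exponentSum h
  rw [map_pow, hsum le_rfl, map_one, ← ofAdd_nsmul, ofAdd_eq_one, nsmul_eq_mul] at h'
  exact mul_ne_zero (by omega) (by omega) h'

end Braid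

theorem exists_isCentralCofinal_braid {m : ℕ} [LinearOrder (PresentedGroup (braidRels m))]
    [MulLeftMono (PresentedGroup (braidRels m))] (hm : 1 ≤ m) :
    ∃ ζ : PresentedGroup (braidRels m), IsCentralCofinal ζ := by
  set z := braidProd m m ^ (m + 1)
  obtain ⟨ζ, hζz, hζ⟩ : ∃ ζ, (ζ = z ∨ ζ = z⁻¹) ∧ 1 < ζ := by
    rcases (braidProd_pow_ne_one hm).lt_or_gt with h | h
    · exact ⟨z⁻¹, Or.inr rfl, one_lt_inv'.2 h⟩
    · exact ⟨z, Or.inl rfl, h⟩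
  have hcomm : ∀ g, Commute ζ g := by
    rcases hζz with rfl | rfl
    exacts [commute_braidProd_pow, fun g => (commute_braidProd_pow g).inv_left]
  set H := boundedSubgroup ζ hcomm
  have hz : z ∈ H := by
    rcases hζz with rfl | rfl
    exacts [self_mem_boundedSubgroup hcomm hζ.le,
      by simpa using H.inv_mem (self_mem_boundedSubgroup hcomm hζ.le)]
  have hH : H = ⊤ := eq_top_of_braidProd_mem H
    (mem_boundedSubgroup_of_pow_mem hcomm (q := m + 1) (by omega) hz)
    (mem_boundedSubgroup_of_pow_mem hcomm (q := m) (by omega)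
      (by rwa [braidGen_zero_mul_braidProd_pow_self]))
  refine ⟨ζ, hcomm, hζ, fun g => ?_⟩
  obtain ⟨n, hn⟩ := (hH ▸ Subgroup.mem_top g : g ∈ H).1
  exact ⟨n + 1, hn.trans_lt (pow_lt_pow_right' hζ n.lt_succ_self)⟩

/-- Theorem 1.2(2): for `n ≥ 2`, the genuine circular orderings are dense in the space of
circular orderings of the braid group `B_n`. -/
theorem stmt19 (n : ℕ) (hn : 2 ≤ n) :
    Dense {d : CircOrd (BraidGroup n) | ¬ IsSecret d.1} := by
  intro d
  by_cases hd : IsSecret d.1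
  · obtain ⟨P, hP, hdP⟩ := hd
    let := hP.linearOrder
    have := hP.mulLeftMono
    obtain ⟨ζ, hζ⟩ := exists_isCentralCofinal_braid (m := n - 1) (by omega)
    exact hζ.mem_closure_setOf_not_isSecret d (hdP.trans hP.circOfCone_eq)
  · exact subset_closure hd

end Paper
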